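/- arXiv:1105.6041 — 2 statements merged into one kernel-verified Lean document; each statement's English description precedes it below -/
import Mathlib

section
/- Let the perceptron with dynamic margin run with accuracy 0 < ε < 1/2: a₀ = 0, a_{t+1} = a_t + y_{k(t)} where updates satisfy a_t·y_{k(t)} ≤ (1−ε)‖a_t‖²/t (threshold 0 at t=0), ‖y_k‖ ≤ R, and a unit vector u satisfies u·y_k ≥ γ_d > 0 for all k. Then for any integers t ≥ N ≥ 1, writing α_N = ‖a_N‖/(R·N) ≤ 1, the number of updates satisfies t^{2ε} ≤ α_N²·(R²/γ_d²)·N^{2ε}·{1 + (α_N^{−2}N^{−1}/(2ε−1))·((t/N)^{2ε−1} − 1)}; in particular t ≤ N·(α_N·R/γ_d)^{1/ε}·(1 + α_N^{−2}N^{−1}/(1−2ε))^{1/(2ε)}. -/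
open scoped InnerProductSpace

/-! With `b t = ‖a t‖ ^ 2` and `δ = 2 - 2ε > 1`, the update rule gives
`b (t+1) ≤ (1 + δ/t) b t + R²`. The shifted sequence `s t = b t + R² t / (δ - 1)` then
satisfies `s (t+1) ≤ (1 + δ/t) s t ≤ ((t+1)/t)^δ s t` (Bernoulli), so `s t / t^δ` is nonincreasing.
Comparing times `N ≤ t` and using the perceptron lower bound `b t ≥ γd² t²` gives
`γd² t^(2ε) + R² t^(2ε-1)/(1-2ε) ≤ ‖a N‖² N^(2ε-2) + R² N^(2ε-1)/(1-2ε)`,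
which is the first bound rearranged; the second drops the term in `(t/N)^(2ε-1) ≥ 0`. -/

theorem div_rpow_succ_le_div_rpow {t δ x y : ℝ} (ht : 0 < t) (hδ : 1 ≤ δ) (hx : 0 ≤ x)
    (hy : y ≤ (1 + δ / t) * x) : y / (t + 1) ^ δ ≤ x / t ^ δ := by
  have bernoulli : 1 + δ / t ≤ (t + 1) ^ δ / t ^ δ := by
    have h := one_add_mul_self_le_rpow_one_add (s := 1 / t) (by linarith [one_div_pos.mpr ht]) hδ
    rwa [one_add_div ht.ne', Real.div_rpow (by linarith) ht.le, mul_one_div] at h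
  rw [div_le_div_iff₀ (by positivity) (by positivity)]
  calc y * t ^ δ ≤ (t + 1) ^ δ / t ^ δ * x * t ^ δ := by gcongr; exact hy.trans (by gcongr)
    _ = x * (t + 1) ^ δ := by field_simp

theorem add_mul_div_rpow_le_of_succ_le {b : ℕ → ℝ} {δ C : ℝ} {N : ℕ} (hN : 0 < N)
    (hδ : 1 < δ) (hb : ∀ t, 0 ≤ b t) (hC : 0 ≤ C)
    (hrec : ∀ t, N ≤ t → b (t + 1) ≤ (1 + δ / t) * b t + C) {t : ℕ} (ht : N ≤ t) :
    (b t + C * t / (δ - 1)) / (t : ℝ) ^ δ ≤ (b N + C * N / (δ - 1)) / (N : ℝ) ^ δ := by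
  induction t, ht using Nat.le_induction with
  | base => rfl
  | succ t ht ih =>
    refine le_trans ?_ ih
    have ht0 : (0 : ℝ) < t := by exact_mod_cast hN.trans_le ht
    push_cast
    apply div_rpow_succ_le_div_rpow ht0 hδ.le
      (add_nonneg (hb t) (div_nonneg (by positivity) (sub_pos.2 hδ).le))
    have hshift : (1 + δ / t) * (b t + C * t / (δ - 1)) =
        (1 + δ / t) * b t + C + C * (t + 1) / (δ - 1) := by
      field_simp [(sub_pos.mpr hδ).ne']
      ring
    linarith [hrec t ht]

theorem mul_sq_add_mul_div_rpow_two_sub {x : ℝ} (hx : 0 < x) (A B ε : ℝ) :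
    (A * x ^ 2 + B * x) / x ^ (2 - 2 * ε) = A * x ^ (2 * ε) + B * x ^ (2 * ε - 1) := by
  have h2 : x ^ (2 * ε) = x ^ 2 / x ^ (2 - 2 * ε) := by
    rw [← Real.rpow_two, ← Real.rpow_sub hx]; ring_nf
  have h1 : x ^ (2 * ε - 1) = x / x ^ (2 - 2 * ε) := by
    rw [show 2 * ε - 1 = 1 - (2 - 2 * ε) by ring, Real.rpow_sub hx, Real.rpow_one]
  rw [h1, h2]
  ring

theorem rpow_le_of_sq_mul_rpow_add_le {t N γ α R ε : ℝ} (ht : 0 < t) (hN : 0 < N)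
    (hγ : γ ≠ 0) (hα : α ≠ 0) (hε : ε < 1 / 2)
    (h : γ ^ 2 * t ^ (2 * ε) + R ^ 2 * t ^ (2 * ε - 1) / (1 - 2 * ε) ≤
      (α * R) ^ 2 * N ^ (2 * ε) + R ^ 2 * N ^ (2 * ε - 1) / (1 - 2 * ε)) :
    t ^ (2 * ε) ≤ α ^ 2 * (R ^ 2 / γ ^ 2) * N ^ (2 * ε) *
      (1 + (α⁻¹ ^ 2 * N⁻¹ / (2 * ε - 1)) * ((t / N) ^ (2 * ε - 1) - 1)) := by
  have hN2ε : N ^ (2 * ε) = N ^ (2 * ε - 1) * N := by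
    rw [← Real.rpow_add_one hN.ne']; ring_nf
  have hNpos : 0 < N ^ (2 * ε - 1) := Real.rpow_pos_of_pos hN _
  rw [Real.div_rpow ht.le hN.le, hN2ε]
  rw [hN2ε] at h
  generalize t ^ (2 * ε) = T at h ⊢
  generalize t ^ (2 * ε - 1) = S at h ⊢
  generalize N ^ (2 * ε - 1) = P at h hNpos ⊢
  have h1 : (1 - 2 * ε) ≠ 0 := by linarith
  have h2 : (2 * ε - 1) ≠ 0 := by linarith
  have hrhs :
      α ^ 2 * (R ^ 2 / γ ^ 2) * (P * N) * (1 + (α⁻¹ ^ 2 * N⁻¹ / (2 * ε - 1)) * (S / P - 1)) =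
        ((α * R) ^ 2 * (P * N) + R ^ 2 * P / (1 - 2 * ε) - R ^ 2 * S / (1 - 2 * ε)) / γ ^ 2 := by
    field_simp
    ring
  rw [hrhs, le_div_iff₀ (by positivity)]
  linarith

theorem div_mul_sub_one_le_div_neg {c w x : ℝ} (hc : c < 0) (hw : 0 ≤ w) (hx : 0 ≤ x) :
    w / c * (x - 1) ≤ w / -c :=
  calc w / c * (x - 1) = w / -c - w / -c * x := by rw [div_neg]; ring
    _ ≤ w / -c := sub_le_self _ (mul_nonneg (div_nonneg hw (neg_nonneg.2 hc.le)) hx)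

theorem le_mul_rpow_of_rpow_le {t N c K ε : ℝ} (hε : 0 < ε) (ht : 0 ≤ t) (hN : 0 ≤ N)
    (hc : 0 ≤ c) (hK : 0 ≤ K) (h : t ^ (2 * ε) ≤ c ^ 2 * N ^ (2 * ε) * K) :
    t ≤ N * c ^ (1 / ε) * K ^ (1 / (2 * ε)) := by
  have h2ε : 0 < 2 * ε := by linarith
  have hpow : (N * c ^ (1 / ε) * K ^ (1 / (2 * ε))) ^ (2 * ε) = c ^ 2 * N ^ (2 * ε) * K := by
    rw [Real.mul_rpow (by positivity) (by positivity), Real.mul_rpow hN (by positivity),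
      ← Real.rpow_mul hc, ← Real.rpow_mul hK, one_div_mul_cancel h2ε.ne',
      one_div_mul_eq_div, mul_div_cancel_right₀ _ hε.ne', Real.rpow_one, Real.rpow_two]
    ring
  rwa [← hpow, Real.rpow_le_rpow_iff ht (by positivity) h2ε] at h

section Perceptron

variable {E : Type*} [NormedAddCommGroup E] {m : ℕ} {y : Fin m → E} {a : ℕ → E}
  {k : ℕ → Fin m}

theorem norm_le_mul_of_norm_le {R : ℝ} (ha0 : a 0 = 0)
    (hupd : ∀ t, a (t + 1) = a t + y (k t)) (hR : ∀ j, ‖y j‖ ≤ R) (t : ℕ) :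
    ‖a t‖ ≤ R * t := by
  induction t with
  | zero => simp [ha0]
  | succ t ih =>
    rw [hupd]
    push_cast
    linarith [norm_add_le (a t) (y (k t)), hR (k t)]

variable [InnerProductSpace ℝ E]

theorem mul_le_inner_of_margin {u : E} {γd : ℝ} (ha0 : a 0 = 0)
    (hupd : ∀ t, a (t + 1) = a t + y (k t)) (hmargin : ∀ j, γd ≤ ⟪u, y j⟫_ℝ)
    (t : ℕ) : γd * t ≤ ⟪u, a t⟫_ℝ := by
  induction t with
  | zero => simp [ha0]
  | succ t ih =>
    rw [hupd, inner_add_right]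
    push_cast
    linarith [hmargin (k t)]

theorem mul_le_norm_of_margin {u : E} {γd : ℝ} (ha0 : a 0 = 0)
    (hupd : ∀ t, a (t + 1) = a t + y (k t)) (hu : ‖u‖ ≤ 1)
    (hmargin : ∀ j, γd ≤ ⟪u, y j⟫_ℝ) (t : ℕ) : γd * t ≤ ‖a t‖ :=
  calc γd * t ≤ ⟪u, a t⟫_ℝ := mul_le_inner_of_margin ha0 hupd hmargin t
    _ ≤ ‖u‖ * ‖a t‖ := real_inner_le_norm u (a t)
    _ ≤ ‖a t‖ := mul_le_of_le_one_left (norm_nonneg _) hu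

theorem norm_sq_succ_le {R ε : ℝ} (hupd : ∀ t, a (t + 1) = a t + y (k t))
    (hmis : ∀ t : ℕ, 1 ≤ t → ⟪a t, y (k t)⟫_ℝ ≤ (1 - ε) * ‖a t‖ ^ 2 / t)
    (hR : ∀ j, ‖y j‖ ≤ R) {t : ℕ} (ht : 1 ≤ t) :
    ‖a (t + 1)‖ ^ 2 ≤ (1 + (2 - 2 * ε) / t) * ‖a t‖ ^ 2 + R ^ 2 := by
  have ht0 : (t : ℝ) ≠ 0 := by positivity
  have hy : ‖y (k t)‖ ^ 2 ≤ R ^ 2 := pow_le_pow_left₀ (norm_nonneg _) (hR _) 2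
  have hexpand :
      (1 + (2 - 2 * ε) / t) * ‖a t‖ ^ 2 = ‖a t‖ ^ 2 + 2 * ((1 - ε) * ‖a t‖ ^ 2 / t) := by
    field_simp
  rw [hupd, norm_add_sq_real, hexpand]
  linarith [hmis t ht]

theorem sq_mul_rpow_add_le_of_perceptron {u : E} {R γd ε : ℝ} (ha0 : a 0 = 0)
    (hupd : ∀ t, a (t + 1) = a t + y (k t))
    (hmis : ∀ t : ℕ, 1 ≤ t → ⟪a t, y (k t)⟫_ℝ ≤ (1 - ε) * ‖a t‖ ^ 2 / t)
    (hR : ∀ j, ‖y j‖ ≤ R) (hu : ‖u‖ ≤ 1) (hγ : 0 ≤ γd)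
    (hmargin : ∀ j, γd ≤ ⟪u, y j⟫_ℝ) (hε : ε < 1 / 2) {N t : ℕ} (hN : 1 ≤ N) (hNt : N ≤ t) :
    γd ^ 2 * (t : ℝ) ^ (2 * ε) + R ^ 2 * (t : ℝ) ^ (2 * ε - 1) / (1 - 2 * ε) ≤
      (‖a N‖ / N) ^ 2 * (N : ℝ) ^ (2 * ε) +
        R ^ 2 * (N : ℝ) ^ (2 * ε - 1) / (1 - 2 * ε) := by
  have hN0 : (0 : ℝ) < N := by exact_mod_cast hN
  have ht0 : (0 : ℝ) < t := by exact_mod_cast hN.trans hNt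
  have hδ : (2 - 2 * ε) - 1 = 1 - 2 * ε := by ring
  have hdecay := add_mul_div_rpow_le_of_succ_le (b := fun n => ‖a n‖ ^ 2) (C := R ^ 2) hN
    (by linarith) (fun _ => sq_nonneg _) (sq_nonneg R)
    (fun s hs => norm_sq_succ_le hupd hmis hR (hN.trans hs)) hNt
  simp only [hδ] at hdecay
  have hlow : γd ^ 2 * (t : ℝ) ^ 2 ≤ ‖a t‖ ^ 2 := by
    rw [← mul_pow]
    exact pow_le_pow_left₀ (by positivity) (mul_le_norm_of_margin ha0 hupd hu hmargin t) 2
  have hnormN : ‖a N‖ ^ 2 = (‖a N‖ / N) ^ 2 * (N : ℝ) ^ 2 := by field_simp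
  calc γd ^ 2 * (t : ℝ) ^ (2 * ε) + R ^ 2 * (t : ℝ) ^ (2 * ε - 1) / (1 - 2 * ε)
      = (γd ^ 2 * (t : ℝ) ^ 2 + R ^ 2 / (1 - 2 * ε) * t) / (t : ℝ) ^ (2 - 2 * ε) := by
        rw [mul_sq_add_mul_div_rpow_two_sub ht0]; ring
    _ ≤ (‖a t‖ ^ 2 + R ^ 2 * t / (1 - 2 * ε)) / (t : ℝ) ^ (2 - 2 * ε) := by
        rw [mul_div_right_comm (R ^ 2)]
        gcongr
    _ ≤ (‖a N‖ ^ 2 + R ^ 2 * N / (1 - 2 * ε)) / (N : ℝ) ^ (2 - 2 * ε) := hdecay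
    _ = (‖a N‖ / N) ^ 2 * (N : ℝ) ^ (2 * ε) +
          R ^ 2 * (N : ℝ) ^ (2 * ε - 1) / (1 - 2 * ε) := by
        rw [hnormN, mul_div_right_comm (R ^ 2), mul_sq_add_mul_div_rpow_two_sub hN0]; ring

end Perceptron

theorem pdm_bound_small_eps_general
    {E : Type*} [NormedAddCommGroup E] [InnerProductSpace ℝ E]
    {m : ℕ} (y : Fin m → E) (a : ℕ → E) (k : ℕ → Fin m) (u : E)
    (R γd ε : ℝ)
    (ha0 : a 0 = 0)
    (hupd : ∀ t : ℕ, a (t + 1) = a t + y (k t))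
    (hmis : ∀ t : ℕ, 1 ≤ t → ⟪a t, y (k t)⟫_ℝ ≤ (1 - ε) * ‖a t‖ ^ 2 / t)
    (hR : ∀ j, ‖y j‖ ≤ R)
    (hu : ‖u‖ = 1)
    (hγ : γd > 0)
    (hmargin : ∀ j, ⟪u, y j⟫_ℝ ≥ γd)
    (hε : 0 < ε) (hε2 : ε < 1 / 2) :
    ∀ N t : ℕ, 1 ≤ N → N ≤ t →
      (‖a N‖ / (R * N) ≤ 1) ∧
      ((t : ℝ) ^ (2 * ε) ≤
        (‖a N‖ / (R * N)) ^ 2 * (R ^ 2 / γd ^ 2) * (N : ℝ) ^ (2 * ε) *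
          (1 + ((‖a N‖ / (R * N))⁻¹ ^ 2 * (N : ℝ)⁻¹ / (2 * ε - 1)) *
            (((t : ℝ) / N) ^ (2 * ε - 1) - 1))) ∧
      ((t : ℝ) ≤ (N : ℝ) * ((‖a N‖ / (R * N)) * R / γd) ^ (1 / ε) *
        (1 + (‖a N‖ / (R * N))⁻¹ ^ 2 * (N : ℝ)⁻¹ / (1 - 2 * ε)) ^
          (1 / (2 * ε))) := by
  intro N t hN hNt
  have hN0 : (0 : ℝ) < N := by exact_mod_cast hN
  have ht0 : (0 : ℝ) < t := by exact_mod_cast hN.trans hNt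
  have hγR : γd ≤ R := calc
    γd ≤ ⟪u, y (k 0)⟫_ℝ := hmargin (k 0)
    _ ≤ ‖u‖ * ‖y (k 0)‖ := real_inner_le_norm _ _
    _ ≤ R := by rw [hu, one_mul]; exact hR _
  have hR0 : 0 < R := hγ.trans_le hγR
  have hη : 0 < 1 - 2 * ε := by linarith
  have haN : 0 < ‖a N‖ :=
    (by positivity : 0 < γd * N).trans_le (mul_le_norm_of_margin ha0 hupd hu.le hmargin N)
  set α := ‖a N‖ / (R * N) with hα
  have hα0 : 0 < α := by positivity
  have hαR : ‖a N‖ / N = α * R := by rw [hα]; field_simp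
  have hbound := rpow_le_of_sq_mul_rpow_add_le ht0 hN0 hγ.ne' hα0.ne' hε2 (hαR ▸
    sq_mul_rpow_add_le_of_perceptron ha0 hupd hmis hR hu.le hγ.le hmargin hε2 hN hNt)
  refine ⟨div_le_one_of_le₀ (norm_le_mul_of_norm_le ha0 hupd hR N) (by positivity),
    hbound, ?_⟩
  have hbracket := div_mul_sub_one_le_div_neg (by linarith : 2 * ε - 1 < 0)
    (by positivity : 0 ≤ α⁻¹ ^ 2 * (N : ℝ)⁻¹)
    (by positivity : 0 ≤ ((t : ℝ) / N) ^ (2 * ε - 1))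
  rw [neg_sub] at hbracket
  apply le_mul_rpow_of_rpow_le hε ht0.le hN0.le (by positivity)
    (add_nonneg zero_le_one (div_nonneg (by positivity) hη.le))
  calc (t : ℝ) ^ (2 * ε) ≤ _ := hbound
    _ ≤ α ^ 2 * (R ^ 2 / γd ^ 2) * (N : ℝ) ^ (2 * ε) *
          (1 + α⁻¹ ^ 2 * (N : ℝ)⁻¹ / (1 - 2 * ε)) := by
      gcongr
    _ = _ := by ring

theorem pdm_bound_small_eps
    {E : Type*} [NormedAddCommGroup E] [InnerProductSpace ℝ E]
    {m : ℕ} (y : Fin m → E) (a : ℕ → E) (k : ℕ → Fin m) (u : E)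
    (R γd ε : ℝ)
    (ha0 : a 0 = 0)
    (hupd : ∀ t : ℕ, a (t + 1) = a t + y (k t))
    (hmis0 : ⟪a 0, y (k 0)⟫_ℝ ≤ 0)
    (hmis : ∀ t : ℕ, 1 ≤ t → ⟪a t, y (k t)⟫_ℝ ≤ (1 - ε) * ‖a t‖ ^ 2 / t)
    (hR : ∀ j, ‖y j‖ ≤ R)
    (hu : ‖u‖ = 1)
    (hγ : γd > 0)
    (hmargin : ∀ j, ⟪u, y j⟫_ℝ ≥ γd)
    (hε : 0 < ε) (hε2 : ε < 1 / 2) :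
    ∀ N t : ℕ, 1 ≤ N → N ≤ t →
      (‖a N‖ / (R * N) ≤ 1) ∧
      ((t : ℝ) ^ (2 * ε) ≤
        (‖a N‖ / (R * N)) ^ 2 * (R ^ 2 / γd ^ 2) * (N : ℝ) ^ (2 * ε) *
          (1 + ((‖a N‖ / (R * N))⁻¹ ^ 2 * (N : ℝ)⁻¹ / (2 * ε - 1)) *
            (((t : ℝ) / N) ^ (2 * ε - 1) - 1))) ∧
      ((t : ℝ) ≤ (N : ℝ) * ((‖a N‖ / (R * N)) * R / γd) ^ (1 / ε) *
        (1 + (‖a N‖ / (R * N))⁻¹ ^ 2 * (N : ℝ)⁻¹ / (1 - 2 * ε)) ^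
          (1 / (2 * ε))) :=
  pdm_bound_small_eps_general y a k u R γd ε ha0 hupd hmis hR hu hγ hmargin hε hε2
end

section
/- Let the perceptron with dynamic margin run with accuracy ε > 1/2 (ε ≤ 1): a₀ = 0, updates a_{t+1} = a_t + y_k with a_t·y_k ≤ (1−ε)‖a_t‖²/t for t ≥ 1 (condition a_0·y_k ≤ 0 at t=0), ‖y_k‖ ≤ R, and a unit vector u satisfies u·y_k ≥ γ_d > 0 for all patterns. Then the number t of updates satisfies t^{2ε} ≤ ε(3−2ε)·(R²/γ_d²)·(1 + (t^{2ε−1} − 1)/(2ε−1)); equivalently t ≤ (ε(3−2ε)/(2ε−1))·(R²/γ_d²)·(1 − 2(1−ε)·t^{1−2ε}). -/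
/-!
Write ζ = 2(1 - ε) ∈ [0, 1). Expanding ‖a_t + y‖² with the dynamic-margin condition gives
‖a_{t+1}‖² ≤ ‖a_t‖² (1 + ζ / t) + R². By the second-order Bernoulli inequality
1 + ζ / t ≤ (1 + 1 / t)^ζ + ζ (1 - ζ) / (2 t²), and since ‖a_t‖ ≤ R t the error term
ζ (1 - ζ) / 2 · ‖a_t‖² / t² is at most ζ (1 - ζ) / 2 · R², so by induction ‖a_t‖² ≤ ε (3 - 2ε) R² t^ζ ∑_{k ≤ t} k^(-ζ)
(note 1 + ζ (1 - ζ) / 2 = ε (3 - 2ε)). On the other hand the margin gives ‖a_t‖ ≥ ⟪u, a_t⟫ ≥ γ_d t.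
Comparing the two bounds and estimating the sum by ∫₁ᵗ x^(-ζ) dx gives the claim.
-/

open Real Set Finset

open scoped InnerProductSpace

theorem one_sub_mul_le_rpow_one_add_neg {q x : ℝ} (hq0 : 0 ≤ q) (hq1 : q ≤ 1) (hx : 0 ≤ x) :
    1 - q * x ≤ (1 + x) ^ (-q) := by
  calc 1 - q * x ≤ (1 + q * x)⁻¹ := by
        rw [← one_div, le_div_iff₀ (by positivity)]
        nlinarith [sq_nonneg (q * x)]
    _ ≤ ((1 + x) ^ q)⁻¹ :=
        inv_anti₀ (by positivity) (rpow_one_add_le_one_add_mul_self (by linarith) hq0 hq1)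
    _ = (1 + x) ^ (-q) := (rpow_neg (by positivity) q).symm

theorem one_add_mul_le_rpow_one_add_add_sq {ζ x : ℝ} (hζ0 : 0 ≤ ζ) (hζ1 : ζ ≤ 1) (hx : 0 ≤ x) :
    1 + ζ * x ≤ (1 + x) ^ ζ + ζ * (1 - ζ) / 2 * x ^ 2 := by
  let g : ℝ → ℝ := fun z => (1 + z) ^ ζ + ζ * (1 - ζ) / 2 * z ^ 2 - ζ * z
  have hg : ∀ z, 0 ≤ z → HasDerivAt g (ζ * (1 + z) ^ (ζ - 1) + ζ * (1 - ζ) * z - ζ) z := by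
    intro z hz
    have h := ((((hasDerivAt_id z).const_add 1).rpow_const (p := ζ) (Or.inl (by
      simp only [id]; positivity))).add ((hasDerivAt_pow 2 z).const_mul (ζ * (1 - ζ) / 2))).sub
      ((hasDerivAt_id z).const_mul ζ)
    refine h.congr_deriv ?_
    norm_num
    ring
  have hmono : MonotoneOn g (Ici 0) := by
    refine monotoneOn_of_hasDerivWithinAt_nonneg (convex_Ici 0)
      (fun z hz => (hg z hz).continuousAt.continuousWithinAt)
      (fun z hz => (hg z (interior_subset hz).out).hasDerivWithinAt) fun z hz => ?_
    have hz : 0 ≤ z := (interior_subset hz).out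
    -- the derivative is `ζ ((1 + z) ^ (-(1 - ζ)) - (1 - (1 - ζ) z))`
    have hb := one_sub_mul_le_rpow_one_add_neg (by linarith) (by linarith) hz (q := 1 - ζ)
    rw [neg_sub] at hb
    nlinarith [mul_le_mul_of_nonneg_left hb hζ0]
  have h : g 0 ≤ g x := hmono self_mem_Ici hx hx
  norm_num [g] at h
  linarith

noncomputable def genHarmonic (ζ : ℝ) (t : ℕ) : ℝ := ∑ i ∈ range t, ((i : ℝ) + 1) ^ (-ζ)

theorem genHarmonic_succ (ζ : ℝ) (t : ℕ) :
    genHarmonic ζ (t + 1) = genHarmonic ζ t + ((t : ℝ) + 1) ^ (-ζ) :=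
  sum_range_succ _ _

theorem genHarmonic_le {ζ : ℝ} (hζ0 : 0 ≤ ζ) (hζ1 : ζ ≠ 1) {t : ℕ} (ht : 1 ≤ t) :
    genHarmonic ζ t ≤ 1 + ((t : ℝ) ^ (1 - ζ) - 1) / (1 - ζ) := by
  obtain ⟨n, rfl⟩ : ∃ n, t = n + 1 := ⟨t - 1, by omega⟩
  have hanti : AntitoneOn (fun x : ℝ => x ^ (-ζ)) (Icc 1 (1 + n)) :=
    (antitoneOn_rpow_Ioi_of_exponent_nonpos (by linarith)).mono
      fun x hx => lt_of_lt_of_le one_pos hx.1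
  have hint := hanti.sum_le_integral
  rw [integral_rpow (Or.inr ⟨by contrapose! hζ1; linarith, by
    rw [Set.uIcc_of_le (by simp)]; exact fun h => by linarith [h.1]⟩)] at hint
  rw [genHarmonic, sum_range_succ']
  push_cast at hint ⊢
  rw [neg_add_eq_sub, one_rpow, add_comm 1 (n : ℝ)] at hint
  simp only [zero_add, one_rpow, add_comm (1 : ℝ) (_ + 1)] at hint ⊢
  linarith

theorem le_genHarmonic_of_recurrence {ζ R : ℝ} {x : ℕ → ℝ} (hζ0 : 0 ≤ ζ) (hζ1 : ζ ≤ 1)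
    (hx0 : ∀ t, 0 ≤ x t) (hxR : ∀ t : ℕ, x t ≤ (R * t) ^ 2)
    (hrec : ∀ t : ℕ, 1 ≤ t → x (t + 1) ≤ x t * (1 + ζ / t) + R ^ 2) {t : ℕ} (ht : 1 ≤ t) :
    x t ≤ (1 + ζ * (1 - ζ) / 2) * R ^ 2 * (t ^ ζ * genHarmonic ζ t) := by
  set d := ζ * (1 - ζ) / 2
  have hd : 0 ≤ d := by positivity
  induction t, ht using Nat.le_induction with
  | base =>
    have hx1 : x 1 ≤ R ^ 2 := by simpa using hxR 1
    have hH1 : genHarmonic ζ 1 = 1 := by simp [genHarmonic]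
    rw [Nat.cast_one, one_rpow, hH1, mul_one, mul_one]
    nlinarith [sq_nonneg R]
  | succ n hn ih =>
    have hn0 : (0 : ℝ) < n := by exact_mod_cast hn
    have htaylor := one_add_mul_le_rpow_one_add_add_sq hζ0 hζ1 (x := 1 / n) (by positivity)
    have hsplit : (n : ℝ) ^ ζ * (1 + 1 / n) ^ ζ = ((n : ℝ) + 1) ^ ζ := by
      rw [← mul_rpow hn0.le (by positivity), mul_one_add, mul_one_div_cancel hn0.ne']
    have hcancel : ((n : ℝ) + 1) ^ ζ * ((n : ℝ) + 1) ^ (-ζ) = 1 := by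
      rw [rpow_neg (by positivity), mul_inv_cancel₀ (by positivity)]
    have hxn : x n / n ^ 2 ≤ R ^ 2 := by
      rw [div_le_iff₀ (by positivity)]; simpa [mul_pow] using hxR n
    calc x (n + 1) ≤ x n * (1 + ζ * (1 / n)) + R ^ 2 := by
          simpa [div_eq_mul_one_div ζ] using hrec n hn
      _ ≤ x n * ((1 + 1 / n) ^ ζ + d * (1 / n) ^ 2) + R ^ 2 := by gcongr; exact hx0 n
      _ = x n * (1 + 1 / n) ^ ζ + d * (x n / n ^ 2) + R ^ 2 := by ring
      _ ≤ (1 + d) * R ^ 2 * (n ^ ζ * genHarmonic ζ n) * (1 + 1 / n) ^ ζ + d * R ^ 2 + R ^ 2 := by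
          gcongr
      _ = (1 + d) * R ^ 2 * (((n + 1 : ℕ) : ℝ) ^ ζ * genHarmonic ζ (n + 1)) := by
          rw [genHarmonic_succ]
          push_cast
          linear_combination (1 + d) * R ^ 2 * (genHarmonic ζ n * hsplit - hcancel)

theorem le_div_mul_one_sub_of_rpow_le {t ε C : ℝ} (ht : 0 < t) (hε : 2 * ε - 1 ≠ 0)
    (h : t ^ (2 * ε) ≤ C * (1 + (t ^ (2 * ε - 1) - 1) / (2 * ε - 1))) :
    t ≤ C / (2 * ε - 1) * (1 - 2 * (1 - ε) * t ^ (1 - 2 * ε)) := by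
  have hinv : t ^ (2 * ε - 1) * t ^ (1 - 2 * ε) = 1 := by
    rw [← rpow_add ht]; norm_num
  calc t = t ^ (2 * ε) * t ^ (1 - 2 * ε) := by rw [← rpow_add ht]; norm_num
    _ ≤ C * (1 + (t ^ (2 * ε - 1) - 1) / (2 * ε - 1)) * t ^ (1 - 2 * ε) := by gcongr
    _ = C / (2 * ε - 1) * (1 - 2 * (1 - ε) * t ^ (1 - 2 * ε)) := by
        field_simp
        linear_combination C * hinv

theorem rpow_le_of_sq_le_mul_rpow {t s γ C R B : ℝ} (ht : 0 < t) (hγ : γ ≠ 0)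
    (h : (γ * t) ^ 2 ≤ C * R ^ 2 * (t ^ (2 - s) * B)) : t ^ s ≤ C * (R ^ 2 / γ ^ 2) * B := by
  have hsplit : t ^ s * t ^ (2 - s) = t ^ 2 := by
    rw [← rpow_add ht, add_sub_cancel, ← rpow_natCast]; norm_num
  refine le_of_mul_le_mul_right ?_ (by positivity : 0 < γ ^ 2 * t ^ (2 - s))
  calc t ^ s * (γ ^ 2 * t ^ (2 - s)) = (γ * t) ^ 2 := by rw [mul_pow, ← hsplit]; ring
    _ ≤ C * R ^ 2 * (t ^ (2 - s) * B) := h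
    _ = C * (R ^ 2 / γ ^ 2) * B * (γ ^ 2 * t ^ (2 - s)) := by field_simp

theorem norm_add_sq_le_of_inner_le {E : Type*} [NormedAddCommGroup E] [InnerProductSpace ℝ E]
    {w v : E} {c R : ℝ} (hinner : ⟪w, v⟫_ℝ ≤ c * ‖w‖ ^ 2) (hv : ‖v‖ ≤ R) :
    ‖w + v‖ ^ 2 ≤ ‖w‖ ^ 2 * (1 + 2 * c) + R ^ 2 := by
  have hv2 : ‖v‖ ^ 2 ≤ R ^ 2 := pow_le_pow_left₀ (norm_nonneg v) hv 2
  rw [norm_add_sq_real]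
  linarith

section Increments

variable {E : Type*} [NormedAddCommGroup E] {a v : ℕ → E}

theorem norm_le_mul_of_forall_norm_le {R : ℝ} (ha0 : a 0 = 0)
    (hupd : ∀ t, a (t + 1) = a t + v t) (hR : ∀ t, ‖v t‖ ≤ R) (t : ℕ) : ‖a t‖ ≤ R * t := by
  induction t with
  | zero => simp [ha0]
  | succ n ih => rw [hupd]; push_cast; linarith [norm_add_le (a n) (v n), hR n]

variable [InnerProductSpace ℝ E]

theorem mul_le_norm_of_forall_le_inner {u : E} {γ : ℝ} (ha0 : a 0 = 0)
    (hupd : ∀ t, a (t + 1) = a t + v t) (hu : ‖u‖ ≤ 1) (hmargin : ∀ t, γ ≤ ⟪u, v t⟫_ℝ) (t : ℕ) :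
    γ * t ≤ ‖a t‖ := by
  have hinner : ∀ n : ℕ, γ * n ≤ ⟪u, a n⟫_ℝ := by
    intro n
    induction n with
    | zero => simp [ha0]
    | succ n ih => rw [hupd, inner_add_right]; push_cast; linarith [hmargin n]
  calc γ * t ≤ ⟪u, a t⟫_ℝ := hinner t
    _ ≤ ‖u‖ * ‖a t‖ := real_inner_le_norm u (a t)
    _ ≤ ‖a t‖ := mul_le_of_le_one_left (norm_nonneg _) hu

theorem norm_sq_le_genHarmonic_of_inner_le {R ε : ℝ} (ha0 : a 0 = 0)
    (hupd : ∀ t, a (t + 1) = a t + v t) (hR : ∀ t, ‖v t‖ ≤ R)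
    (hmis : ∀ t : ℕ, 1 ≤ t → ⟪a t, v t⟫_ℝ ≤ (1 - ε) * ‖a t‖ ^ 2 / t)
    (hε : 1 / 2 ≤ ε) (hε1 : ε ≤ 1) {t : ℕ} (ht : 1 ≤ t) :
    ‖a t‖ ^ 2 ≤ ε * (3 - 2 * ε) * R ^ 2 * (t ^ (2 * (1 - ε)) * genHarmonic (2 * (1 - ε)) t) := by
  have hrec (n : ℕ) (hn : 1 ≤ n) :
      ‖a (n + 1)‖ ^ 2 ≤ ‖a n‖ ^ 2 * (1 + 2 * (1 - ε) / n) + R ^ 2 := by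
    rw [hupd, mul_div_assoc]
    exact norm_add_sq_le_of_inner_le (by rw [div_mul_eq_mul_div]; exact hmis n hn) (hR n)
  have hbound := le_genHarmonic_of_recurrence (x := fun n => ‖a n‖ ^ 2) (by linarith)
    (by linarith) (fun _ => by positivity)
    (fun n => pow_le_pow_left₀ (norm_nonneg _) (norm_le_mul_of_forall_norm_le ha0 hupd hR n) 2)
    hrec ht
  rwa [show 1 + 2 * (1 - ε) * (1 - 2 * (1 - ε)) / 2 = ε * (3 - 2 * ε) by ring] at hbound

end Increments

theorem pdm_bound_large_eps_general
    {E : Type*} [NormedAddCommGroup E] [InnerProductSpace ℝ E]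
    {m : ℕ} (y : Fin m → E) (a : ℕ → E) (k : ℕ → Fin m) (u : E)
    (R γd ε : ℝ)
    (ha0 : a 0 = 0)
    (hupd : ∀ t : ℕ, a (t + 1) = a t + y (k t))
    (hmis : ∀ t : ℕ, 1 ≤ t → ⟪a t, y (k t)⟫_ℝ ≤ (1 - ε) * ‖a t‖ ^ 2 / t)
    (hR : ∀ j, ‖y j‖ ≤ R)
    (hu : ‖u‖ = 1)
    (hγ : γd > 0)
    (hmargin : ∀ j, ⟪u, y j⟫_ℝ ≥ γd)
    (hε : 1 / 2 < ε) (hε1 : ε ≤ 1) :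
    ∀ t : ℕ, 1 ≤ t →
      ((t : ℝ) ^ (2 * ε) ≤ ε * (3 - 2 * ε) * (R ^ 2 / γd ^ 2) *
        (1 + ((t : ℝ) ^ (2 * ε - 1) - 1) / (2 * ε - 1))) ∧
      ((t : ℝ) ≤ (ε * (3 - 2 * ε) / (2 * ε - 1)) * (R ^ 2 / γd ^ 2) *
        (1 - 2 * (1 - ε) * (t : ℝ) ^ (1 - 2 * ε))) := by
  intro t ht
  have ht0 : (0 : ℝ) < t := by exact_mod_cast ht
  have hsum : genHarmonic (2 * (1 - ε)) t ≤ 1 + ((t : ℝ) ^ (2 * ε - 1) - 1) / (2 * ε - 1) := by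
    have h := genHarmonic_le (ζ := 2 * (1 - ε)) (by linarith) (by intro h; linarith) ht
    rwa [show 1 - 2 * (1 - ε) = 2 * ε - 1 by ring] at h
  have hupper := norm_sq_le_genHarmonic_of_inner_le ha0 hupd (fun _ => hR _) hmis hε.le hε1 ht
  have hlower := mul_le_norm_of_forall_le_inner ha0 hupd hu.le (fun _ => hmargin _) t
  have hfirst : (t : ℝ) ^ (2 * ε) ≤ ε * (3 - 2 * ε) * (R ^ 2 / γd ^ 2) *
      (1 + ((t : ℝ) ^ (2 * ε - 1) - 1) / (2 * ε - 1)) := by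
    refine rpow_le_of_sq_le_mul_rpow ht0 hγ.ne' ?_
    have hC : 0 ≤ ε * (3 - 2 * ε) := by nlinarith
    calc (γd * t) ^ 2 ≤ ‖a t‖ ^ 2 := pow_le_pow_left₀ (by positivity) hlower 2
      _ ≤ _ := hupper
      _ ≤ _ := by rw [show 2 - 2 * ε = 2 * (1 - ε) by ring]; gcongr
  exact ⟨hfirst, by simpa [mul_div_right_comm] using
    le_div_mul_one_sub_of_rpow_le ht0 (by linarith) hfirst⟩

theorem pdm_bound_large_eps
    {E : Type*} [NormedAddCommGroup E] [InnerProductSpace ℝ E]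
    {m : ℕ} (y : Fin m → E) (a : ℕ → E) (k : ℕ → Fin m) (u : E)
    (R γd ε : ℝ)
    (ha0 : a 0 = 0)
    (hupd : ∀ t : ℕ, a (t + 1) = a t + y (k t))
    (hmis0 : ⟪a 0, y (k 0)⟫_ℝ ≤ 0)
    (hmis : ∀ t : ℕ, 1 ≤ t → ⟪a t, y (k t)⟫_ℝ ≤ (1 - ε) * ‖a t‖ ^ 2 / t)
    (hR : ∀ j, ‖y j‖ ≤ R)
    (hu : ‖u‖ = 1)
    (hγ : γd > 0)
    (hmargin : ∀ j, ⟪u, y j⟫_ℝ ≥ γd)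
    (hε : 1 / 2 < ε) (hε1 : ε ≤ 1) :
    ∀ t : ℕ, 1 ≤ t →
      ((t : ℝ) ^ (2 * ε) ≤ ε * (3 - 2 * ε) * (R ^ 2 / γd ^ 2) *
        (1 + ((t : ℝ) ^ (2 * ε - 1) - 1) / (2 * ε - 1))) ∧
      ((t : ℝ) ≤ (ε * (3 - 2 * ε) / (2 * ε - 1)) * (R ^ 2 / γd ^ 2) *
        (1 - 2 * (1 - ε) * (t : ℝ) ^ (1 - 2 * ε))) :=
  pdm_bound_large_eps_general y a k u R γd ε ha0 hupd hmis hR hu hγ hmargin hε hε1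
end
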